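/- Theorem 1 recovers Globevnik's lemma: in the setting of the two-sided Schwarz inequality for F : 𝔻 → Ω_n, if W_1 = F(ζ_1) = 0, then d_1 = 1 and max{ max_{μ ∈ σ(W_2)} dist_ℳ(μ; σ(W_1))^{d_1}, max_{λ ∈ σ(W_1)} dist_ℳ(λ; σ(W_2))^{d_2} } = r(W_2), i.e. the left-hand side of the inequality equals the spectral radius of W_2; consequently r(W_2) ≤ |(ζ_1 − ζ_2)/(1 − conj(ζ_1)ζ_2)|. -/

import Mathlib

/-!
Precomposing with the disc automorphism `mobius ζ₁` reduces the Schwarz bound to `G 0 = 0`, where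
`G z = z • K z` with `K` holomorphic. The spectra of `K z` lie in the closed unit disc: the
coefficients of the characteristic polynomial of `K z ^ m`, multiplied by a power of `z`, are
those of `G z ^ m`, whose roots lie in the unit disc; the maximum modulus principle removes the
power of `z` and leaves a bound `2 ^ n` independent of `m`, so Cauchy's root bound gives
`‖ν‖ ^ m ≤ 2 ^ n + 1` for every eigenvalue `ν` of `K z` and every `m`.
Since `W₁ = 0`, its minimal polynomial is `X` and `distM μ {0} = ‖μ‖`, so the first term of the
maximum is `r(W₂)` and the second is `(min ‖μ‖) ^ d₂ ≤ r(W₂)`.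
-/

open Metric

/-- The spectral radius of a complex `n × n` matrix. -/
noncomputable def sRad {n : ℕ} (A : Matrix (Fin n) (Fin n) ℂ) : ℝ :=
  sSup ((fun μ => ‖μ‖) '' spectrum ℂ A)

/-- The pseudo-hyperbolic distance from `μ` to a set `K ⊆ 𝔻`. -/
noncomputable def distM (μ : ℂ) (K : Set ℂ) : ℝ :=
  sInf ((fun z => ‖(μ - z) / (1 - (starRingEnd ℂ z) * μ)‖) '' K)

open Polynomial Filter Topology ComplexConjugate

theorem norm_le_of_forall_norm_pow_mul_le {h : ℂ → ℂ} (hd : DifferentiableOn ℂ h (ball 0 1))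
    (N : ℕ) {M : ℝ} (hM : ∀ w ∈ ball (0 : ℂ) 1, ‖w ^ N * h w‖ ≤ M) {z : ℂ}
    (hz : z ∈ ball (0 : ℂ) 1) : ‖h z‖ ≤ M := by
  rw [mem_ball_zero_iff] at hz
  have hcircle : ∀ s ∈ Set.Ioo ‖z‖ 1, ‖h z‖ ≤ M / s ^ N := by
    rintro s ⟨hzs, hs1⟩
    have hs0 : 0 < s := (norm_nonneg z).trans_lt hzs
    refine Complex.norm_le_of_forall_mem_frontier_norm_le isBounded_ball
      (hd.diffContOnCl_ball (closedBall_subset_ball hs1)) (fun w hw => ?_)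
      (subset_closure (mem_ball_zero_iff.2 hzs))
    rw [frontier_ball 0 hs0.ne', mem_sphere_zero_iff_norm] at hw
    have := hM w (mem_ball_zero_iff.2 (hw ▸ hs1))
    rw [norm_mul, norm_pow, hw] at this
    rwa [le_div_iff₀' (by positivity)]
  have hlim : Tendsto (fun s : ℝ => M / s ^ N) (𝓝[<] 1) (𝓝 M) := by
    have : Tendsto (fun s : ℝ => M / s ^ N) (𝓝 1) (𝓝 (M / 1 ^ N)) :=
      tendsto_const_nhds.div ((continuous_pow N).tendsto 1) (by simp)
    simpa using this.mono_left nhdsWithin_le_nhds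
  exact ge_of_tendsto hlim (eventually_of_mem (Ioo_mem_nhdsLT hz) hcircle)

noncomputable def mobius (a z : ℂ) : ℂ := (z + a) / (1 + conj a * z)

theorem normSq_one_add_conj_mul_sub_normSq_add (a z : ℂ) :
    Complex.normSq (1 + conj a * z) - Complex.normSq (z + a) =
      (1 - Complex.normSq a) * (1 - Complex.normSq z) := by
  simp only [Complex.normSq_apply, Complex.add_re, Complex.add_im, Complex.mul_re,
    Complex.mul_im, Complex.one_re, Complex.one_im, Complex.conj_re, Complex.conj_im]
  ring

section Mobius

variable {a z : ℂ}

theorem normSq_add_lt_normSq_one_add_conj_mul (ha : a ∈ ball (0 : ℂ) 1)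
    (hz : z ∈ ball (0 : ℂ) 1) : Complex.normSq (z + a) < Complex.normSq (1 + conj a * z) := by
  have h1 : ∀ w ∈ ball (0 : ℂ) 1, 0 < 1 - Complex.normSq w := fun w hw => by
    rw [Complex.normSq_eq_norm_sq, sub_pos, sq_lt_one_iff₀ (norm_nonneg w)]
    exact mem_ball_zero_iff.1 hw
  have := normSq_one_add_conj_mul_sub_normSq_add a z
  nlinarith [mul_pos (h1 a ha) (h1 z hz)]

theorem one_add_conj_mul_ne_zero (ha : a ∈ ball (0 : ℂ) 1) (hz : z ∈ ball (0 : ℂ) 1) :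
    1 + conj a * z ≠ 0 := fun h =>
  (Complex.normSq_nonneg (z + a)).not_gt (by simpa [h] using normSq_add_lt_normSq_one_add_conj_mul ha hz)

theorem mobius_mem_ball (ha : a ∈ ball (0 : ℂ) 1) (hz : z ∈ ball (0 : ℂ) 1) :
    mobius a z ∈ ball (0 : ℂ) 1 := by
  have h := normSq_add_lt_normSq_one_add_conj_mul ha hz
  rw [Complex.normSq_eq_norm_sq, Complex.normSq_eq_norm_sq] at h
  rw [mem_ball_zero_iff, mobius, norm_div,
    div_lt_one (norm_pos_iff.2 (one_add_conj_mul_ne_zero ha hz))]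
  exact lt_of_pow_lt_pow_left₀ 2 (norm_nonneg _) h

theorem differentiableOn_mobius (ha : a ∈ ball (0 : ℂ) 1) :
    DifferentiableOn ℂ (mobius a) (ball 0 1) :=
  (differentiableOn_id.add_const a).div (differentiableOn_id.const_mul _ |>.const_add 1)
    fun _ hz => one_add_conj_mul_ne_zero ha hz

@[simp] theorem mobius_zero : mobius a 0 = a := by simp [mobius]

theorem mobius_neg_apply : mobius (-a) z = (z - a) / (1 - conj a * z) := by
  simp [mobius, sub_eq_add_neg]

theorem mobius_mobius_neg (ha : a ∈ ball (0 : ℂ) 1) (hz : z ∈ ball (0 : ℂ) 1) :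
    mobius a (mobius (-a) z) = z := by
  have hD : 1 - conj a * z ≠ 0 := by
    simpa [sub_eq_add_neg] using one_add_conj_mul_ne_zero (a := -a) (by simpa using ha) hz
  have ha' : 1 - conj a * a ≠ 0 := by
    rw [← Complex.normSq_eq_conj_mul_self, ← Complex.ofReal_one, ← Complex.ofReal_sub,
      Complex.ofReal_ne_zero, sub_ne_zero, ne_comm, Complex.normSq_eq_norm_sq]
    exact (pow_lt_one₀ (norm_nonneg a) (mem_ball_zero_iff.1 ha) two_ne_zero).ne
  have hnum : (z - a) / (1 - conj a * z) + a = z * (1 - conj a * a) / (1 - conj a * z) := by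
    rw [div_add' _ _ _ hD]
    ring
  have hden : 1 + conj a * ((z - a) / (1 - conj a * z)) = (1 - conj a * a) / (1 - conj a * z) := by
    rw [mul_div_assoc', one_add_div hD]
    ring
  rw [mobius_neg_apply, mobius, hnum, hden, div_div_div_cancel_right₀ hD, mul_div_cancel_right₀ _ ha']

end Mobius

theorem Polynomial.Monic.norm_le_of_isRoot {K : Type*} [NormedDivisionRing K] {p : K[X]}
    (hp : p.Monic) {B : ℝ} (hB : ∀ i, ‖p.coeff i‖ ≤ B) {a : K} (ha : p.IsRoot a) :
    ‖a‖ ≤ B + 1 := by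
  have hB0 : 0 ≤ B := (norm_nonneg _).trans (hB 0)
  have hsup : (Finset.range p.natDegree).sup (‖p.coeff ·‖₊) ≤ ⟨B, hB0⟩ :=
    Finset.sup_le fun i _ => hB i
  have hbound : cauchyBound p ≤ ⟨B, hB0⟩ + 1 := by
    rw [cauchyBound, hp.leadingCoeff, nnnorm_one, div_one]
    exact add_le_add hsup le_rfl
  exact_mod_cast ((ha.norm_lt_cauchyBound hp.ne_zero).trans_le hbound).le

namespace Matrix

variable {ι : Type*} [Fintype ι] [DecidableEq ι]

theorem charpoly_smul_comp {K : Type*} [Field K] [Infinite K] (c : K) (B : Matrix ι ι K) :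
    (c • B).charpoly.comp (C c * X) = C (c ^ Fintype.card ι) * B.charpoly := by
  refine Polynomial.funext fun t => ?_
  simp only [eval_comp, eval_mul, eval_C, eval_X, eval_charpoly, ← det_smul, smul_sub]
  congr 2
  ext i j
  simp [scalar_apply, diagonal_apply]

theorem charpoly_smul_coeff {K : Type*} [Field K] [Infinite K] (c : K) (B : Matrix ι ι K)
    {k : ℕ} (hk : k ≤ Fintype.card ι) :
    (c • B).charpoly.coeff k = c ^ (Fintype.card ι - k) * B.charpoly.coeff k := by
  rcases eq_or_ne c 0 with rfl | hc
  · rcases hk.lt_or_eq with hk | rfl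
    · simp [charpoly_zero, coeff_X_pow, hk.ne, Nat.sub_ne_zero_of_lt hk]
    · have h := B.charpoly_monic.coeff_natDegree
      rw [charpoly_natDegree_eq_dim] at h
      simp [charpoly_zero, h]
  · have h := congrArg (coeff · k) (charpoly_smul_comp c B)
    simp only [comp_C_mul_X_coeff, coeff_C_mul] at h
    apply mul_right_cancel₀ (pow_ne_zero k hc)
    rw [h, mul_right_comm, ← pow_add, Nat.sub_add_cancel hk]

theorem norm_charpoly_coeff_le {K : Type*} [NormedField K] [IsAlgClosed K] (A : Matrix ι ι K)
    {r : ℝ} (h : spectrum K A ⊆ closedBall 0 r) (k : ℕ) :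
    ‖A.charpoly.coeff k‖ ≤ r ^ (Fintype.card ι - k) * (Fintype.card ι).choose k := by
  simpa [charpoly_natDegree_eq_dim] using
    coeff_le_of_roots_le (f := RingHom.id K) k A.charpoly_monic (IsAlgClosed.splits _)
      fun z hz => by simpa using h (mem_spectrum_iff_isRoot_charpoly.2
        (isRoot_of_mem_roots (by simpa using hz)))

end Matrix

section Analytic

variable {𝕜 E ι : Type*} [NontriviallyNormedField 𝕜] [NormedAddCommGroup E] [NormedSpace 𝕜 E]
  [Fintype ι] [DecidableEq ι] {A : E → Matrix ι ι 𝕜} {s : Set E}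

theorem AnalyticOnNhd.matrix_charpoly_coeff (hA : ∀ i j, AnalyticOnNhd 𝕜 (fun z => A z i j) s)
    (k : ℕ) : AnalyticOnNhd 𝕜 (fun z => (A z).charpoly.coeff k) s := by
  have h : (fun z => (A z).charpoly.coeff k) = fun z =>
      MvPolynomial.aeval (fun ij : ι × ι => A z ij.1 ij.2) ((Matrix.charpoly.univ ℤ ι).coeff k) := by
    funext z
    have hz : Matrix.of (Function.curry fun ij : ι × ι => A z ij.1 ij.2) = A z := rfl
    rw [MvPolynomial.aeval_eq_eval₂Hom, Matrix.charpoly.univ_coeff_eval₂Hom, hz]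
  rw [h]
  exact AnalyticOnNhd.aeval_mvPolynomial (f := fun z (ij : ι × ι) => A z ij.1 ij.2)
    (fun ij => hA ij.1 ij.2) _

theorem AnalyticOnNhd.matrix_pow_apply (hA : ∀ i j, AnalyticOnNhd 𝕜 (fun z => A z i j) s)
    (m : ℕ) (i j : ι) : AnalyticOnNhd 𝕜 (fun z => (A z ^ m) i j) s := by
  induction m generalizing i j with
  | zero => simpa [Matrix.one_apply] using analyticOnNhd_const
  | succ m ih =>
    simp only [pow_succ, Matrix.mul_apply]
    exact Finset.analyticOnNhd_fun_sum _ fun l _ => (ih i l).mul (hA l j)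

end Analytic

section SpectralSchwarz

variable {ι : Type*} [Fintype ι] [DecidableEq ι]

theorem norm_charpoly_coeff_pow_le_choose {K : ℂ → Matrix ι ι ℂ}
    (hK : ∀ i j, DifferentiableOn ℂ (fun z => K z i j) (ball 0 1))
    (hsp : ∀ z ∈ ball (0 : ℂ) 1, spectrum ℂ (z • K z) ⊆ closedBall 0 1)
    {m : ℕ} (hm : 0 < m) (k : ℕ) {z : ℂ} (hz : z ∈ ball (0 : ℂ) 1) :
    ‖(K z ^ m).charpoly.coeff k‖ ≤ (Fintype.card ι).choose k := by
  rcases lt_or_ge (Fintype.card ι) k with hk | hk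
  · rw [coeff_eq_zero_of_natDegree_lt (by rwa [Matrix.charpoly_natDegree_eq_dim]), norm_zero]
    positivity
  have hd : DifferentiableOn ℂ (fun w => (K w ^ m).charpoly.coeff k) (ball 0 1) :=
    (AnalyticOnNhd.matrix_charpoly_coeff (fun i j => AnalyticOnNhd.matrix_pow_apply
      (fun i j => (hK i j).analyticOnNhd isOpen_ball) m i j) k).differentiableOn
  refine norm_le_of_forall_norm_pow_mul_le hd (m * (Fintype.card ι - k)) (fun w hw => ?_) hz
  have hpow : spectrum ℂ ((w • K w) ^ m) ⊆ closedBall 0 1 := by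
    rw [spectrum.map_pow_of_pos _ hm]
    rintro _ ⟨μ, hμ, rfl⟩
    simpa using pow_le_one₀ (norm_nonneg μ) (by simpa using hsp w hw hμ)
  rw [pow_mul, ← Matrix.charpoly_smul_coeff _ _ hk, ← _root_.smul_pow]
  simpa using Matrix.norm_charpoly_coeff_le _ hpow k

theorem spectrum_subset_closedBall_one_of_smul {K : ℂ → Matrix ι ι ℂ}
    (hK : ∀ i j, DifferentiableOn ℂ (fun z => K z i j) (ball 0 1))
    (hsp : ∀ z ∈ ball (0 : ℂ) 1, spectrum ℂ (z • K z) ⊆ closedBall 0 1)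
    {z : ℂ} (hz : z ∈ ball (0 : ℂ) 1) : spectrum ℂ (K z) ⊆ closedBall 0 1 := by
  intro ν hν
  have hbound : ∀ m, 0 < m → ‖ν‖ ^ m ≤ 2 ^ Fintype.card ι + 1 := fun m hm => by
    rw [← norm_pow]
    refine (K z ^ m).charpoly_monic.norm_le_of_isRoot (fun k => ?_)
      (Matrix.mem_spectrum_iff_isRoot_charpoly.1 (spectrum.pow_image_subset _ m ⟨ν, hν, rfl⟩))
    exact (norm_charpoly_coeff_pow_le_choose hK hsp hm k hz).trans
      (by exact_mod_cast Nat.choose_le_two_pow _ _)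
  rw [mem_closedBall_zero_iff]
  by_contra! h
  obtain ⟨m, hm, hpos⟩ := (((tendsto_pow_atTop_atTop_of_one_lt h).eventually_gt_atTop
    (2 ^ Fintype.card ι + 1)).and (eventually_gt_atTop 0)).exists
  exact (hbound m hpos).not_gt hm

theorem spectrum_subset_closedBall_norm_of_apply_zero [Nonempty ι] {G : ℂ → Matrix ι ι ℂ}
    (hG : ∀ i j, DifferentiableOn ℂ (fun z => G z i j) (ball 0 1)) (h0 : G 0 = 0)
    (hsp : ∀ z ∈ ball (0 : ℂ) 1, spectrum ℂ (G z) ⊆ closedBall 0 1) {z : ℂ}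
    (hz : z ∈ ball (0 : ℂ) 1) : spectrum ℂ (G z) ⊆ closedBall 0 ‖z‖ := by
  set K : ℂ → Matrix ι ι ℂ := fun w => Matrix.of fun i j => dslope (G · i j) 0 w
  have hGK : ∀ w, G w = w • K w := fun w => by
    ext i j
    simpa [K, h0] using (sub_smul_dslope (G · i j) 0 w).symm
  have hK : ∀ i j, DifferentiableOn ℂ (fun w => K w i j) (ball 0 1) := fun i j =>
    (Complex.differentiableOn_dslope (ball_mem_nhds 0 one_pos)).2 (hG i j)
  have hKsp := spectrum_subset_closedBall_one_of_smul hK (fun w hw => hGK w ▸ hsp w hw) hz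
  rw [hGK, spectrum.smul_eq_smul _ _ (spectrum.nonempty_of_isAlgClosed_of_finiteDimensional ℂ _)]
  rintro _ ⟨ν, hν, rfl⟩
  simpa [norm_mul] using mul_le_of_le_one_right (norm_nonneg z) (by simpa using hKsp hν)

theorem spectrum_subset_closedBall_of_apply_eq_zero [Nonempty ι] {F : ℂ → Matrix ι ι ℂ}
    (hF : ∀ i j, DifferentiableOn ℂ (fun ζ => F ζ i j) (ball 0 1))
    (hsp : ∀ ζ ∈ ball (0 : ℂ) 1, spectrum ℂ (F ζ) ⊆ closedBall 0 1) {ζ₁ ζ₂ : ℂ}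
    (hζ₁ : ζ₁ ∈ ball (0 : ℂ) 1) (hζ₂ : ζ₂ ∈ ball (0 : ℂ) 1) (h0 : F ζ₁ = 0) :
    spectrum ℂ (F ζ₂) ⊆ closedBall 0 ‖(ζ₁ - ζ₂) / (1 - conj ζ₁ * ζ₂)‖ := by
  have hw : mobius (-ζ₁) ζ₂ ∈ ball (0 : ℂ) 1 := mobius_mem_ball (by simpa using hζ₁) hζ₂
  have key := spectrum_subset_closedBall_norm_of_apply_zero (G := fun z => F (mobius ζ₁ z))
    (fun i j => (hF i j).comp (differentiableOn_mobius hζ₁) fun z hz => mobius_mem_ball hζ₁ hz)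
    (by simpa using h0) (fun z hz => hsp _ (mobius_mem_ball hζ₁ hz)) hw
  rwa [mobius_mobius_neg hζ₁ hζ₂, mobius_neg_apply, ← norm_neg, ← neg_div, neg_sub] at key

end SpectralSchwarz

section SpectralRadius

variable {n : ℕ} {A : Matrix (Fin n) (Fin n) ℂ}

theorem norm_le_sRad {μ : ℂ} (hμ : μ ∈ spectrum ℂ A) : ‖μ‖ ≤ sRad A :=
  le_csSup (A.finite_spectrum.image _).bddAbove (Set.mem_image_of_mem _ hμ)

theorem sRad_le {r : ℝ} (hr : 0 ≤ r) (h : spectrum ℂ A ⊆ closedBall 0 r) : sRad A ≤ r :=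
  Real.sSup_le (by rintro _ ⟨μ, hμ, rfl⟩; simpa using h hμ) hr

theorem sInf_norm_spectrum_pow_le_sRad (hA : sRad A ≤ 1) {d : ℕ} (hd : d ≠ 0) :
    sInf ((‖·‖) '' spectrum ℂ A) ^ d ≤ sRad A := by
  have hS := A.finite_spectrum.image (‖·‖)
  have h0 : 0 ≤ sInf ((‖·‖) '' spectrum ℂ A) :=
    Real.sInf_nonneg (by rintro _ ⟨μ, -, rfl⟩; exact norm_nonneg μ)
  have hle : sInf ((‖·‖) '' spectrum ℂ A) ≤ sRad A := Real.sInf_le_sSup _ hS.bddBelow hS.bddAbove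
  exact (pow_le_of_le_one h0 (hle.trans hA) hd).trans hle

end SpectralRadius

theorem distM_singleton_zero (μ : ℂ) : distM μ {0} = ‖μ‖ := by simp [distM]

theorem distM_zero (K : Set ℂ) : distM 0 K = sInf ((‖·‖) '' K) := by simp [distM]

/-- Theorem 1 recovers Globevnik's lemma: if `W₁ = F(ζ₁) = 0` then `d₁ = 1`, the
left-hand side of the two-sided Schwarz inequality equals `r(W₂)`, and consequently
`r(W₂) ≤ |(ζ₁ - ζ₂)/(1 - conj(ζ₁)ζ₂)|`. -/
theorem stmt12 {n : ℕ} (hn : 2 ≤ n) (F : ℂ → Matrix (Fin n) (Fin n) ℂ)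
    (hol : ∀ i j : Fin n, DifferentiableOn ℂ (fun ζ => F ζ i j) (ball (0 : ℂ) 1))
    (hmap : ∀ ζ ∈ ball (0 : ℂ) 1, sRad (F ζ) < 1)
    (ζ₁ ζ₂ : ℂ) (hζ₁ : ζ₁ ∈ ball (0 : ℂ) 1) (hζ₂ : ζ₂ ∈ ball (0 : ℂ) 1)
    (hF0 : F ζ₁ = 0) :
    (minpoly ℂ (F ζ₁)).natDegree = 1 ∧
    max
      (sSup ((fun μ =>
        distM μ (spectrum ℂ (F ζ₁)) ^ (minpoly ℂ (F ζ₁)).natDegree) '' spectrum ℂ (F ζ₂)))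
      (sSup ((fun lam =>
        distM lam (spectrum ℂ (F ζ₂)) ^ (minpoly ℂ (F ζ₂)).natDegree) '' spectrum ℂ (F ζ₁)))
      = sRad (F ζ₂) ∧
    sRad (F ζ₂) ≤ ‖(ζ₁ - ζ₂) / (1 - (starRingEnd ℂ ζ₁) * ζ₂)‖ := by
  have : Nonempty (Fin n) := ⟨⟨0, by omega⟩⟩
  have hsp : ∀ ζ ∈ ball (0 : ℂ) 1, spectrum ℂ (F ζ) ⊆ closedBall 0 1 := fun ζ hζ _ hμ =>
    mem_closedBall_zero_iff.2 ((norm_le_sRad hμ).trans (hmap ζ hζ).le)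
  have hd₁ : (minpoly ℂ (F ζ₁)).natDegree = 1 := by rw [hF0, minpoly.zero, natDegree_X]
  refine ⟨hd₁, ?_, sRad_le (norm_nonneg _)
    (spectrum_subset_closedBall_of_apply_eq_zero hol hsp hζ₁ hζ₂ hF0)⟩
  rw [hd₁, hF0, spectrum.zero_eq, Set.image_singleton, csSup_singleton, distM_zero]
  simp only [distM_singleton_zero, pow_one]
  exact max_eq_left (sInf_norm_spectrum_pow_le_sRad (hmap ζ₂ hζ₂).le
    (minpoly.natDegree_pos (IsIntegral.of_finite ℂ _)).ne')
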